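/- Let C be a Brill-Noether general curve of genus g and let t, d, r be integers with 0 < t < r < d ≤ g+r. If A is a line bundle on C with deg(A) ≤ t·d/r, then h^0(A) ≤ t+1; moreover, if h^0(A) = t+1 then deg(A) = t·d/r, d = g+r, and t = r-1. -/

import Mathlib

/-! On a Brill–Noether general curve of genus `g`, a line bundle with `h⁰ ≥ s + 1` has degree at
least `s (g + s + 1) / (s + 1)`, a strictly increasing function of `s`. The hypotheses give
`deg A ≤ t d / r ≤ t (g + r) / r ≤ t (g + t + 1) / (t + 1)`, so `h⁰(A) ≥ t + 2` is impossible, and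
`h⁰(A) = t + 1` forces equality throughout this chain; the last inequality is strict unless
`r = t + 1`, since `g > 0`. -/

open scoped TensorProduct

/-- An abstract smooth complex projective curve, recording its genus, its points, its Picard
group of line bundles with degrees, a total section ring (Cox ring) giving spaces of global
sections and multiplication maps, Serre duality, Riemann-Roch, and an abstract theory of
vector bundles (rank, degree, h^0, twists, duals, exterior powers, subbundles, short exact
sequences and syzygy bundles of globally generated line bundles). -/
structure AbstractCurve where
  /-- the genus -/
  g : ℕ
  /-- the points of the curve -/
  Pt : Type
  /-- isomorphism classes of line bundles, i.e. the Picard group -/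
  LB : Type
  [grp : CommGroup LB]
  /-- degree of a line bundle -/
  degL : LB → ℤ
  deg_mul : ∀ A B : LB, degL (A * B) = degL A + degL B
  deg_inv : ∀ A : LB, degL A⁻¹ = - degL A
  /-- the total section ring (Cox ring), graded by the Picard group -/
  R : Type
  [ring : CommRing R]
  [alg : Algebra ℂ R]
  /-- the space of global sections of a line bundle, as a subspace of the section ring -/
  H0 : LB → Submodule ℂ R
  sec_mul_mem : ∀ {A B : LB} {a b : R}, a ∈ H0 A → b ∈ H0 B → a * b ∈ H0 (A * B)
  /-- h⁰ of a line bundle -/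
  h0 : LB → ℕ
  h0_eq : ∀ A : LB, h0 A = Module.finrank ℂ (H0 A)
  /-- h¹ of a line bundle -/
  h1 : LB → ℕ
  /-- the canonical line bundle -/
  K : LB
  deg_K : degL K = 2 * (g : ℤ) - 2
  /-- Serre duality -/
  serre : ∀ A : LB, h1 A = h0 (K * A⁻¹)
  /-- Riemann–Roch -/
  riemann_roch : ∀ A : LB, (h0 A : ℤ) - h1 A = degL A + 1 - g
  /-- the line bundle 𝒪(p) associated to a point p -/
  pt : Pt → LB
  deg_pt : ∀ p, degL (pt p) = 1
  h0_pt : ∀ p, 1 ≤ h0 (pt p)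
  /-- isomorphism classes of vector bundles -/
  VB : Type
  rankV : VB → ℕ
  degV : VB → ℤ
  h0V : VB → ℕ
  /-- a line bundle viewed as a vector bundle -/
  ofLB : LB → VB
  /-- twist of a vector bundle by a line bundle -/
  twist : VB → LB → VB
  /-- dual vector bundle -/
  dualV : VB → VB
  /-- exterior power of a vector bundle -/
  extV : ℕ → VB → VB
  /-- `Sub F E` : F is a subbundle of E -/
  Sub : VB → VB → Prop
  /-- `SES A B C` : there is a short exact sequence 0 → A → B → C → 0 -/
  SES : VB → VB → VB → Prop
  /-- the syzygy bundle M_L, kernel of the evaluation map H⁰(L) ⊗ 𝒪 → L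
  (meaningful for globally generated L) -/
  syz : LB → VB
  /-- the (complete) linear system of the line bundle induces a birational morphism -/
  InducesBirational : LB → Prop
  rank_syz : ∀ A : LB, rankV (syz A) = h0 A - 1
  deg_syz : ∀ A : LB, degV (syz A) = - degL A
  rank_twist : ∀ E A, rankV (twist E A) = rankV E
  deg_twist : ∀ E A, degV (twist E A) = degV E + rankV E * degL A
  h0_ofLB : ∀ A, h0V (ofLB A) = h0 A
  rank_ofLB : ∀ A, rankV (ofLB A) = 1
  deg_ofLB : ∀ A, degV (ofLB A) = degL A
  twist_ofLB : ∀ A B, twist (ofLB A) B = ofLB (A * B)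
  rank_extV : ∀ t E, rankV (extV t E) = (rankV E).choose t
  ses_rank : ∀ {A B C}, SES A B C → rankV B = rankV A + rankV C
  ses_deg : ∀ {A B C}, SES A B C → degV B = degV A + degV C
  ses_h0_le : ∀ {A B C}, SES A B C → h0V B ≤ h0V A + h0V C
  ses_twist : ∀ {A B C} (P : LB), SES A B C → SES (twist A P) (twist B P) (twist C P)

attribute [instance] AbstractCurve.grp AbstractCurve.ring AbstractCurve.alg

namespace AbstractCurve

variable (X : AbstractCurve)

/-- The multiplication map H⁰(A) ⊗ H⁰(B) → R, whose image lies in H⁰(A*B). -/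
noncomputable def mulMap (A B : X.LB) :
    TensorProduct ℂ (X.H0 A) (X.H0 B) →ₗ[ℂ] X.R :=
  TensorProduct.lift (((LinearMap.mul ℂ X.R).comp (X.H0 A).subtype).compl₂ (X.H0 B).subtype)

/-- A line bundle is effective if it has a nonzero global section. -/
def Effective (A : X.LB) : Prop := 1 ≤ X.h0 A

/-- A line bundle is globally generated (equivalently base-point free) iff no point is a
base point: h⁰(A(-p)) = h⁰(A) - 1 for every point p. -/
def GloballyGen (A : X.LB) : Prop :=
  ∀ p : X.Pt, X.h0 (A * (X.pt p)⁻¹) = X.h0 A - 1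

/-- Slope semistability: every subbundle F satisfies μ(F) ≤ μ(E), with denominators cleared. -/
def Semistable (E : X.VB) : Prop :=
  ∀ F : X.VB, X.Sub F E → 0 < X.rankV F →
    X.degV F * X.rankV E ≤ X.degV E * X.rankV F

/-- Slope stability: every proper subbundle F satisfies μ(F) < μ(E). -/
def Stable (E : X.VB) : Prop :=
  ∀ F : X.VB, X.Sub F E → 0 < X.rankV F → X.rankV F < X.rankV E →
    X.degV F * X.rankV E < X.degV E * X.rankV F

/-- A bundle E of integral slope μ admits a theta divisor iff some line bundle P of degree
g - 1 - μ has h⁰(E ⊗ P) = 0. -/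
def AdmitsTheta (E : X.VB) (μ : ℤ) : Prop :=
  ∃ P : X.LB, X.degL P = (X.g : ℤ) - 1 - μ ∧ X.h0V (X.twist E P) = 0

/-- The theta divisor of E (of integral slope μ), as a subset of Pic^{g-1-μ}. -/
def Theta (E : X.VB) (μ : ℤ) : Set X.LB :=
  {P | X.degL P = (X.g : ℤ) - 1 - μ ∧ X.h0V (X.twist E P) ≠ 0}

/-- Brill–Noether generality: no line bundle has negative Brill–Noether number
ρ = g - (s+1)(g - d + s). -/
def BNGeneral : Prop :=
  ∀ (A : X.LB) (s : ℕ), s + 1 ≤ X.h0 A →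
    0 ≤ (X.g : ℤ) - (s + 1) * ((X.g : ℤ) - X.degL A + s)

/-- Petri generality: all Petri maps H⁰(A) ⊗ H⁰(K ⊗ A^∨) → H⁰(K) are injective. -/
def PetriGeneral : Prop :=
  ∀ A : X.LB, Function.Injective (X.mulMap A (X.K * A⁻¹))

/-- Cohomological stability: h⁰(∧ᵗE ⊗ P^∨) = 0 for every 0 < t < rank E and every line
bundle P with deg P ≥ t·μ(E) (denominators cleared). -/
def CohStable (E : X.VB) : Prop :=
  ∀ (t : ℕ) (P : X.LB), 0 < t → t < X.rankV E →
    (t : ℤ) * X.degV E ≤ X.degL P * X.rankV E →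
    X.h0V (X.twist (X.extV t E) P⁻¹) = 0

/-- Cohomological semistability: h⁰(∧ᵗE ⊗ P^∨) = 0 for every 0 < t < rank E and every line
bundle P with deg P > t·μ(E) (denominators cleared). -/
def CohSemistable (E : X.VB) : Prop :=
  ∀ (t : ℕ) (P : X.LB), 0 < t → t < X.rankV E →
    (t : ℤ) * X.degV E < X.degL P * X.rankV E →
    X.h0V (X.twist (X.extV t E) P⁻¹) = 0

end AbstractCurve

noncomputable def brillNoetherDegree (g s : ℕ) : ℚ := s * (g + s + 1) / (s + 1)

theorem brillNoetherDegree_strictMono (g : ℕ) : StrictMono (brillNoetherDegree g) := by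
  refine strictMono_nat_of_lt_succ fun s => ?_
  unfold brillNoetherDegree
  rw [div_lt_div_iff₀ (by positivity) (by positivity)]
  push_cast
  nlinarith [(Nat.cast_nonneg g : (0 : ℚ) ≤ g), (Nat.cast_nonneg s : (0 : ℚ) ≤ s)]

theorem AbstractCurve.BNGeneral.brillNoetherDegree_le_degL {X : AbstractCurve}
    (hBN : X.BNGeneral) {A : X.LB} {s : ℕ} (hs : s + 1 ≤ X.h0 A) :
    brillNoetherDegree X.g s ≤ X.degL A := by
  have hρ : (s : ℤ) * (X.g + s + 1) ≤ X.degL A * (s + 1) := by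
    linear_combination hBN A s hs
  unfold brillNoetherDegree
  rw [div_le_iff₀ (by positivity)]
  exact_mod_cast hρ

theorem mul_add_div_le_brillNoetherDegree {g t r : ℕ} (htr : t < r) :
    (t * (g + r) / r : ℚ) ≤ brillNoetherDegree g t := by
  have htr' : (t + 1 : ℚ) ≤ r := by exact_mod_cast htr
  unfold brillNoetherDegree
  rw [div_le_div_iff₀ (by linarith) (by positivity)]
  linear_combination (mul_nonneg (by positivity : (0 : ℚ) ≤ t * g) (sub_nonneg.2 htr'))

theorem mul_add_div_lt_brillNoetherDegree {g t r : ℕ} (hg : 0 < g) (ht : 0 < t) (htr : t + 1 < r) :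
    (t * (g + r) / r : ℚ) < brillNoetherDegree g t := by
  have htr' : (t + 1 : ℚ) < r := by exact_mod_cast htr
  unfold brillNoetherDegree
  rw [div_lt_div_iff₀ (by linarith) (by positivity)]
  linear_combination (mul_pos (by positivity : (0 : ℚ) < t * g) (sub_pos.2 htr'))

open AbstractCurve in
/-- On a Brill–Noether general curve with 0 < t < r < d ≤ g + r, any line bundle A with
deg A ≤ t·d/r has h⁰(A) ≤ t + 1; and if h⁰(A) = t + 1 then deg A = t·d/r, d = g + r and
t = r - 1. -/
theorem h0_le_of_deg_le (X : AbstractCurve) (hBN : BNGeneral X)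
    (t r : ℕ) (d : ℤ) (ht : 0 < t) (htr : t < r) (hrd : (r : ℤ) < d)
    (hdg : d ≤ (X.g : ℤ) + r)
    (A : X.LB) (hdA : X.degL A * r ≤ t * d) :
    X.h0 A ≤ t + 1 ∧
    (X.h0 A = t + 1 → X.degL A * r = t * d ∧ d = (X.g : ℤ) + r ∧ t = r - 1) := by
  have hr : (0 : ℚ) < r := by exact_mod_cast (Nat.zero_le t).trans_lt htr
  have hg : 0 < X.g := by omega
  have hdeg_le : (X.degL A : ℚ) ≤ t * d / r := by
    rw [le_div_iff₀ hr]; exact_mod_cast hdA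
  have hd_le : (t * d / r : ℚ) ≤ t * (X.g + r) / r := by
    gcongr; exact_mod_cast hdg
  have hbound := mul_add_div_le_brillNoetherDegree (g := X.g) htr
  refine ⟨?_, fun hA => ?_⟩
  · by_contra! h
    have hmin := hBN.brillNoetherDegree_le_degL (s := t + 1) h
    linarith [brillNoetherDegree_strictMono X.g t.lt_succ_self]
  have hmin := hBN.brillNoetherDegree_le_degL hA.ge
  have hrt : r = t + 1 := by
    by_contra hrt
    linarith [mul_add_div_lt_brillNoetherDegree hg ht (by omega : t + 1 < r)]
  have hdeg : (X.degL A : ℚ) = t * d / r := by linarith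
  have hd' : (t * d / r : ℚ) = t * (X.g + r) / r := by linarith
  refine ⟨?_, ?_, by omega⟩
  · rw [eq_div_iff hr.ne'] at hdeg; exact_mod_cast hdeg
  · field_simp at hd'; exact_mod_cast hd'
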